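/- arXiv:2305.01472 — 2 statements merged into one kernel-verified Lean document; each statement's English description precedes it below -/
import Mathlib

section
/- Let ℓ be a positive integer, let Γ be an abelian group, and let A ⊆ Γ be a non-empty set. Let (G, γ) be a connected Γ-labelled graph with arb_{(Γ,A)}(G, γ) ≥ 2^ℓ. Then G contains a set X of vertices such that (i) G[X] is connected, (ii) arb_{(Γ,A)}(G[X], γ) ≥ arb_{(Γ,A)}(G, γ)/2^ℓ, and (iii) for every pair of distinct vertices x and y in X, there is an X-path in G of length at least ℓ whose endpoints are x and y. -/
namespace ArbPaper

universe u v

/-- The `γ`-value of a walk: the sum of the labels of its edges. -/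
def walkVal {V : Type u} {Γ : Type v} [AddCommGroup Γ] {G : SimpleGraph V}
    (γ : Sym2 V → Γ) {x y : V} (w : G.Walk x y) : Γ :=
  (w.edges.map γ).sum

/-- The set `S` induces a subgraph having no cycle of `γ`-value in `A`. -/
def NoCycleValIn {V : Type u} {Γ : Type v} [AddCommGroup Γ] (G : SimpleGraph V)
    (γ : Sym2 V → Γ) (A : Set Γ) (S : Set V) : Prop :=
  ∀ (v : V) (w : G.Walk v v), w.IsCycle → (∀ x ∈ w.support, x ∈ S) →
    walkVal γ w ∉ A

/-- The `(Γ, A)`-vertex-arboricity of the subgraph of `G` induced on `S`: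
the minimum number of parts in a partition of `S` such that each part induces
a subgraph having no cycle of `γ`-value in `A`. -/
noncomputable def arbOn {V : Type u} {Γ : Type v} [AddCommGroup Γ] (G : SimpleGraph V)
    (γ : Sym2 V → Γ) (A : Set Γ) (S : Set V) : ℕ :=
  sInf {k : ℕ | ∃ f : V → Fin k,
    ∀ i : Fin k, NoCycleValIn G γ A {v | v ∈ S ∧ f v = i}}

/-- The `(Γ, A)`-vertex-arboricity of `(G, γ)`. -/
noncomputable def arb {V : Type u} {Γ : Type v} [AddCommGroup Γ] (G : SimpleGraph V)
    (γ : Sym2 V → Γ) (A : Set Γ) : ℕ :=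
  arbOn G γ A Set.univ

/-- `G` contains an `(A, d)`-cycle: a cycle of `γ`-value in `A` and length at least `d`. -/
def ContainsADCycle {V : Type u} {Γ : Type v} [AddCommGroup Γ] (G : SimpleGraph V)
    (γ : Sym2 V → Γ) (A : Set Γ) (d : ℕ) : Prop :=
  ∃ (v : V) (w : G.Walk v v), w.IsCycle ∧ walkVal γ w ∈ A ∧ d ≤ w.length

/-- `b` (the branching vertices) together with the branching paths `P i j` (for `i < j`)
form a subdivision of the complete graph `K t` inside `G`. -/
def IsKtSubdivision {V : Type u} (G : SimpleGraph V) (t : ℕ) (b : Fin t → V)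
    (P : ∀ i j : Fin t, G.Walk (b i) (b j)) : Prop :=
  Function.Injective b ∧
  (∀ i j : Fin t, i < j → (P i j).IsPath) ∧
  (∀ i j : Fin t, i < j → ∀ v ∈ (P i j).support, v ∈ Set.range b → v = b i ∨ v = b j) ∧
  (∀ i j k l : Fin t, i < j → k < l → (i, j) ≠ (k, l) → ∀ v,
    v ∈ (P i j).support → v ∈ (P k l).support →
      (v = b i ∨ v = b j) ∧ (v = b k ∨ v = b l))

/-- `G` itself is (as a whole) a subdivision of `K t` with data `b`, `P`:
every vertex and every edge of `G` lies on some branching path. -/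
def IsSpanningKtSubdivision {V : Type u} (G : SimpleGraph V) (t : ℕ) (b : Fin t → V)
    (P : ∀ i j : Fin t, G.Walk (b i) (b j)) : Prop :=
  IsKtSubdivision G t b P ∧
  (∀ v : V, ∃ i j : Fin t, i < j ∧ v ∈ (P i j).support) ∧
  (∀ e ∈ G.edgeSet, ∃ i j : Fin t, i < j ∧ e ∈ (P i j).edges)

/-- `G` contains an `(A, d)`-subdivision of `K t`: a subdivision of `K t` in which every
branching path has `γ`-value in `A` and length at least `d`. -/
def ContainsADSubdivision {V : Type u} {Γ : Type v} [AddCommGroup Γ] (G : SimpleGraph V)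
    (γ : Sym2 V → Γ) (A : Set Γ) (t d : ℕ) : Prop :=
  ∃ (b : Fin t → V) (P : ∀ i j : Fin t, G.Walk (b i) (b j)),
    IsKtSubdivision G t b P ∧
    ∀ i j : Fin t, i < j → walkVal γ (P i j) ∈ A ∧ d ≤ (P i j).length

/-- `w` is an `X`-path lying inside the induced subgraph `G[Y]`: a path of length at
least `2` whose endpoints lie in `X`, internal vertices lie outside `X`, and all of
whose vertices lie in `Y`. -/
def IsXPathIn {V : Type u} (G : SimpleGraph V) (X Y : Set V) {x y : V}
    (w : G.Walk x y) : Prop :=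
  w.IsPath ∧ 2 ≤ w.length ∧ x ∈ X ∧ y ∈ X ∧
  (∀ v ∈ w.support, v ∈ Y) ∧
  (∀ v ∈ w.support, v ≠ x → v ≠ y → v ∉ X)

/-- `(L 0, L 1, …, L p)` is a leveling of the connected graph `G`. -/
def IsLeveling {V : Type u} (G : SimpleGraph V) (p : ℕ) (L : ℕ → Set V) : Prop :=
  (∀ i j, i ≤ p → j ≤ p → i ≠ j → Disjoint (L i) (L j)) ∧
  (∃ v : V, L 0 = {v}) ∧
  (∀ v : V, ∃ i, i ≤ p ∧ v ∈ L i) ∧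
  (∀ i, 1 ≤ i → i ≤ p → ∀ v ∈ L i,
    (∃ u ∈ L (i - 1), G.Adj v u) ∧ (∀ j, j + 2 ≤ i → ∀ u ∈ L j, ¬ G.Adj v u))

/-- `G[Y]` is a connected component of `G[S]`. -/
def IsCompOf {V : Type u} (G : SimpleGraph V) (Y S : Set V) : Prop :=
  Y ⊆ S ∧ (G.induce Y).Connected ∧ ∀ u ∈ Y, ∀ v ∈ S, G.Adj u v → v ∈ Y


section Aux
set_option linter.unusedSectionVars false

open SimpleGraph

variable {V : Type u} {Γ : Type v} [Fintype V] [AddCommGroup Γ]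
  {G : SimpleGraph V} (γ : Sym2 V → Γ) (A : Set Γ)

/-- Reachability within a set `S`. -/
def Reach (G : SimpleGraph V) (S : Set V) (u v : V) : Prop :=
  ∃ w : G.Walk u v, ∀ x ∈ w.support, x ∈ S

variable {γ A}

lemma reach_refl {S : Set V} {u : V} (hu : u ∈ S) : Reach G S u u :=
  ⟨SimpleGraph.Walk.nil, by simp [hu]⟩

lemma Reach.mem_left {S : Set V} {u v : V} (h : Reach G S u v) : u ∈ S := by
  obtain ⟨w, hw⟩ := h; exact hw u w.start_mem_support

lemma Reach.mem_right {S : Set V} {u v : V} (h : Reach G S u v) : v ∈ S := by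
  obtain ⟨w, hw⟩ := h; exact hw v w.end_mem_support

lemma Reach.symm {S : Set V} {u v : V} (h : Reach G S u v) : Reach G S v u := by
  obtain ⟨w, hw⟩ := h
  exact ⟨w.reverse, fun x hx => hw x (by rwa [Walk.support_reverse, List.mem_reverse] at hx)⟩

lemma Reach.trans {S : Set V} {u v z : V} (h : Reach G S u v) (h' : Reach G S v z) :
    Reach G S u z := by
  obtain ⟨w, hw⟩ := h; obtain ⟨w', hw'⟩ := h'
  refine ⟨w.append w', fun x hx => ?_⟩
  rcases (Walk.mem_support_append_iff _ _).1 hx with h | h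
  · exact hw x h
  · exact hw' x h

lemma reach_of_mem_support {S : Set V} {u v x : V} (w : G.Walk u v)
    (hS : ∀ y ∈ w.support, y ∈ S) (hx : x ∈ w.support) : Reach G S u x := by
  haveI := Classical.decEq V
  exact ⟨w.takeUntil x hx, fun y hy => hS y (Walk.support_takeUntil_subset _ _ hy)⟩

lemma induce_connected_iff' {S : Set V} :
    (G.induce S).Connected ↔ S.Nonempty ∧ ∀ u ∈ S, ∀ v ∈ S, Reach G S u v := by
  rw [connected_induce_iff, Subgraph.connected_iff_forall_exists_walk_subgraph]
  simp only [Subgraph.induce_verts]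
  constructor
  · rintro ⟨hne, h⟩
    refine ⟨hne, fun u hu v hv => ?_⟩
    obtain ⟨p, hp⟩ := h hu hv
    refine ⟨p, fun x hx => ?_⟩
    have : x ∈ p.toSubgraph.verts := (p.mem_verts_toSubgraph).2 hx
    exact Subgraph.verts_mono hp this
  · rintro ⟨hne, h⟩
    refine ⟨hne, fun {u} {v} hu hv => ?_⟩
    obtain ⟨p, hp⟩ := h u hu v hv
    refine ⟨p, le_trans p.toSubgraph_le_induce_support ?_⟩
    exact Subgraph.induce_mono le_rfl (fun x hx => hp x hx)

/-! ### arbOn lemmas -/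

lemma noCycleValIn_mono {S T : Set V} (h : S ⊆ T) (hT : NoCycleValIn G γ A T) :
    NoCycleValIn G γ A S :=
  fun v w hc hsup => hT v w hc (fun x hx => h (hsup x hx))

lemma noCycleValIn_subsingleton {S : Set V} (h : S.Subsingleton) :
    NoCycleValIn G γ A S := by
  intro v w hc hsup
  exfalso
  cases w with
  | nil => exact hc.ne_nil rfl
  | @cons _ b _ hadj p =>
    refine hadj.ne (h (hsup v (Walk.start_mem_support _)) (hsup b ?_))
    simp [Walk.support_cons]

lemma card_mem_arbSet (S : Set V) :
    Fintype.card V ∈ {k : ℕ | ∃ f : V → Fin k,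
      ∀ i : Fin k, NoCycleValIn G γ A {v | v ∈ S ∧ f v = i}} := by
  refine ⟨Fintype.equivFin V, fun i => noCycleValIn_subsingleton ?_⟩
  rintro a ⟨-, ha⟩ b ⟨-, hb⟩
  exact (Fintype.equivFin V).injective (ha.trans hb.symm)

lemma arbOn_mem (S : Set V) :
    arbOn G γ A S ∈ {k : ℕ | ∃ f : V → Fin k,
      ∀ i : Fin k, NoCycleValIn G γ A {v | v ∈ S ∧ f v = i}} :=
  Nat.sInf_mem ⟨_, card_mem_arbSet (γ := γ) (A := A) S⟩

lemma arbOn_le_card (S : Set V) : arbOn G γ A S ≤ Fintype.card V :=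
  Nat.sInf_le (card_mem_arbSet S)

lemma arbOn_pos [Nonempty V] (S : Set V) : 0 < arbOn G γ A S := by
  rcases Nat.eq_zero_or_pos (arbOn G γ A S) with h | h
  · obtain ⟨f, -⟩ := arbOn_mem (γ := γ) (A := A) S
    rw [h] at f
    exact (f (Classical.arbitrary V)).elim0
  · exact h

lemma exists_witness_of_le {S : Set V} {k : ℕ} (h : arbOn G γ A S ≤ k) :
    ∃ f : V → Fin k, ∀ i : Fin k, NoCycleValIn G γ A {v | v ∈ S ∧ f v = i} := by
  obtain ⟨f, hf⟩ := arbOn_mem (γ := γ) (A := A) S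
  refine ⟨fun v => Fin.castLE h (f v), fun i v w hc hsup => ?_⟩
  obtain ⟨hvS, hvi⟩ := hsup v w.start_mem_support
  refine hf (f v) v w hc (fun x hx => ?_)
  obtain ⟨hxS, hxi⟩ := hsup x hx
  exact ⟨hxS, Fin.castLE_injective h (hxi.trans hvi.symm)⟩

lemma arbOn_le_of_witness {S : Set V} {k : ℕ} (f : V → Fin k)
    (hf : ∀ i : Fin k, NoCycleValIn G γ A {v | v ∈ S ∧ f v = i}) :
    arbOn G γ A S ≤ k :=
  Nat.sInf_le ⟨f, hf⟩

lemma arbOn_subsingleton_le_one (S : Set V) (h : S.Subsingleton) :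
    arbOn G γ A S ≤ 1 :=
  arbOn_le_of_witness (fun _ => 0)
    (fun _ => noCycleValIn_subsingleton (fun a ha b hb => h ha.1 hb.1))

lemma arbOn_union_le (S T : Set V) :
    arbOn G γ A (S ∪ T) ≤ arbOn G γ A S + arbOn G γ A T := by
  classical
  obtain ⟨f, hf⟩ := arbOn_mem (γ := γ) (A := A) S
  obtain ⟨g, hg⟩ := arbOn_mem (γ := γ) (A := A) T
  refine arbOn_le_of_witness
    (fun v => if v ∈ S then (f v).castAdd (arbOn G γ A T) else (g v).natAdd (arbOn G γ A S))
    (fun i => ?_)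
  by_cases hi : (i : ℕ) < arbOn G γ A S
  · refine noCycleValIn_mono (T := {v | v ∈ S ∧ f v = ⟨i, hi⟩}) ?_ (hf ⟨i, hi⟩)
    rintro v ⟨hvST, hvi⟩
    by_cases hvS : v ∈ S
    · simp only [if_pos hvS] at hvi
      refine ⟨hvS, Fin.ext ?_⟩
      simpa using congrArg Fin.val hvi
    · simp only [if_neg hvS] at hvi
      have := congrArg Fin.val hvi
      simp only [Fin.coe_natAdd] at this
      omega
  · have hib : (i : ℕ) - arbOn G γ A S < arbOn G γ A T := by have := i.isLt; omega
    refine noCycleValIn_mono (T := {v | v ∈ T ∧ g v = ⟨(i : ℕ) - arbOn G γ A S, hib⟩}) ?_ (hg _)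
    rintro v ⟨hvST, hvi⟩
    by_cases hvS : v ∈ S
    · simp only [if_pos hvS] at hvi
      have := congrArg Fin.val hvi
      simp only [Fin.coe_castAdd] at this
      have := (f v).isLt
      omega
    · simp only [if_neg hvS] at hvi
      have hT : v ∈ T := hvST.resolve_left hvS
      have h2 := congrArg Fin.val hvi
      simp only [Fin.coe_natAdd] at h2
      exact ⟨hT, Fin.ext (by simp; omega)⟩

end Aux

section Aux2

open SimpleGraph

set_option linter.unusedSectionVars false

variable {V : Type u} {Γ : Type v} [Fintype V] [AddCommGroup Γ]
  {G : SimpleGraph V} {γ : Sym2 V → Γ} {A : Set Γ}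

/-- The connected-within-`P` component of `v`. -/
def Cl (G : SimpleGraph V) (P : Set V) (v : V) : Set V := {u | Reach G P v u}

lemma Cl_subset {P : Set V} {v : V} : Cl G P v ⊆ P := fun _ h => h.mem_right

lemma mem_Cl_self {P : Set V} {v : V} (hv : v ∈ P) : v ∈ Cl G P v := reach_refl hv

lemma Cl_eq_of_mem {P : Set V} {u v : V} (h : u ∈ Cl G P v) : Cl G P u = Cl G P v := by
  ext x
  exact ⟨fun hx => h.trans hx, fun hx => (Reach.symm h).trans hx⟩

lemma reach_Cl {P : Set V} {v u w : V} (hu : u ∈ Cl G P v) (hw : w ∈ Cl G P v) :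
    Reach G (Cl G P v) u w := by
  obtain ⟨ω, hω⟩ := (Reach.symm hu).trans hw
  exact ⟨ω, fun x hx => hu.trans (reach_of_mem_support ω hω hx)⟩

lemma exists_component [Nonempty V] {P : Set V} (hP : P.Nonempty) :
    ∃ Y : Set V, Y ⊆ P ∧ Y.Nonempty ∧ (∀ u ∈ Y, ∀ v ∈ Y, Reach G Y u v) ∧
      arbOn G γ A P ≤ arbOn G γ A Y := by
  classical
  set N : Set ℕ := (fun v => arbOn G γ A (Cl G P v)) '' P with hN
  have hNne : N.Nonempty := hP.image _
  have hbdd : BddAbove N := by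
    refine ⟨Fintype.card V, ?_⟩
    rintro n ⟨v, -, rfl⟩
    exact arbOn_le_card _
  obtain ⟨v₀, hv₀P, hv₀⟩ := Nat.sSup_mem hNne hbdd
  set k := arbOn G γ A (Cl G P v₀) with hk
  have hmax : ∀ v ∈ P, arbOn G γ A (Cl G P v) ≤ k := by
    intro v hv
    have h1 : arbOn G γ A (Cl G P v) ≤ sSup N := le_csSup hbdd ⟨v, hv, rfl⟩
    exact h1.trans_eq hv₀.symm
  have hk0 : 0 < k := arbOn_pos _
  set g : Set V → (V → Fin k) := fun C =>
    if h : arbOn G γ A C ≤ k then (exists_witness_of_le h).choose else fun _ => ⟨0, hk0⟩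
    with hgdef
  have hg : ∀ C : Set V, (h : arbOn G γ A C ≤ k) →
      ∀ i : Fin k, NoCycleValIn G γ A {v | v ∈ C ∧ g C v = i} := by
    intro C h i
    rw [hgdef]
    simp only [dif_pos h]
    exact (exists_witness_of_le h).choose_spec i
  refine ⟨Cl G P v₀, Cl_subset, ⟨v₀, mem_Cl_self hv₀P⟩,
    fun u hu v hv => reach_Cl hu hv, ?_⟩
  refine arbOn_le_of_witness (fun v => g (Cl G P v) v) (fun i v w hc hsup => ?_)
  have hv := hsup v w.start_mem_support
  have hall : ∀ x ∈ w.support, x ∈ Cl G P v :=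
    fun x hx => reach_of_mem_support w (fun y hy => (hsup y hy).1) hx
  refine hg (Cl G P v) (hmax v hv.1) i v w hc (fun x hx => ?_)
  refine ⟨hall x hx, ?_⟩
  have hcl : Cl G P x = Cl G P v := Cl_eq_of_mem (hall x hx)
  have h2 : g (Cl G P x) x = i := (hsup x hx).2
  rwa [hcl] at h2

/-! ### Levelings -/

/-- Distance from `r` within `S`. -/
noncomputable def lev (G : SimpleGraph V) (S : Set V) (r v : V) : ℕ :=
  sInf {n | ∃ w : G.Walk r v, (∀ x ∈ w.support, x ∈ S) ∧ w.length = n}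

lemma lev_le {S : Set V} {r v : V} (w : G.Walk r v) (hw : ∀ x ∈ w.support, x ∈ S) :
    lev G S r v ≤ w.length :=
  Nat.sInf_le ⟨w, hw, rfl⟩

lemma lev_exists {S : Set V} {r v : V} (h : Reach G S r v) :
    ∃ w : G.Walk r v, (∀ x ∈ w.support, x ∈ S) ∧ w.length = lev G S r v := by
  obtain ⟨w, hw⟩ := h
  have hmem : w.length ∈ {n | ∃ w' : G.Walk r v, (∀ x ∈ w'.support, x ∈ S) ∧ w'.length = n} :=
    ⟨w, hw, rfl⟩
  exact Nat.sInf_mem ⟨_, hmem⟩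

lemma lev_self {S : Set V} {r : V} (hr : r ∈ S) : lev G S r r = 0 :=
  Nat.le_zero.1 (lev_le Walk.nil (by simp [hr]))

lemma eq_of_lev_zero {S : Set V} {r v : V} (h : Reach G S r v) (h0 : lev G S r v = 0) :
    v = r := by
  obtain ⟨w, -, hlen⟩ := lev_exists h
  exact (Walk.eq_of_length_eq_zero (hlen.trans h0)).symm

lemma lev_adj {S : Set V} {r u v : V} (h : Reach G S r u) (hv : v ∈ S) (hadj : G.Adj u v) :
    lev G S r v ≤ lev G S r u + 1 := by
  obtain ⟨w, hw, hlen⟩ := lev_exists h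
  refine le_trans (lev_le (w.concat hadj) ?_) (by rw [Walk.length_concat, hlen])
  intro x hx
  rw [Walk.support_concat, List.mem_append] at hx
  rcases hx with hx | hx
  · exact hw x hx
  · simp at hx; subst hx; exact hv

lemma exists_parent {S : Set V} {r v : V} (h : Reach G S r v) (h1 : 0 < lev G S r v) :
    ∃ u, G.Adj v u ∧ Reach G S r u ∧ lev G S r u + 1 = lev G S r v := by
  obtain ⟨w, hw, hlen⟩ := lev_exists h
  have hnil : ¬ w.reverse.Nil := by
    rw [Walk.not_nil_iff_lt_length, Walk.length_reverse, hlen]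
    exact h1
  obtain ⟨b, hadj, q, hq⟩ := Walk.not_nil_iff.1 hnil
  have hqsup : ∀ x ∈ q.support, x ∈ S := by
    intro x hx
    have : x ∈ w.reverse.support := by rw [hq, Walk.support_cons]; exact List.mem_cons_of_mem _ hx
    rw [Walk.support_reverse, List.mem_reverse] at this
    exact hw x this
  have hreach : Reach G S r b :=
    ⟨q.reverse, fun x hx => hqsup x (by rwa [Walk.support_reverse, List.mem_reverse] at hx)⟩
  have hlevb : lev G S r b ≤ lev G S r v - 1 := by
    have hlq : q.length = lev G S r v - 1 := by
      have : w.reverse.length = q.length + 1 := by rw [hq, Walk.length_cons]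
      rw [Walk.length_reverse, hlen] at this
      omega
    have h3 := lev_le q.reverse (fun x hx => hqsup x
      (by rwa [Walk.support_reverse, List.mem_reverse] at hx))
    rwa [Walk.length_reverse, hlq] at h3
  have hvb : lev G S r v ≤ lev G S r b + 1 := lev_adj hreach h.mem_right hadj.symm
  exact ⟨b, hadj, hreach, by omega⟩

lemma exists_descend {S : Set V} {r v : V} (h : Reach G S r v) :
    ∃ w : G.Walk v r, (∀ x ∈ w.support, x ∈ S) ∧
      ∀ x ∈ w.support, lev G S r x ≤ lev G S r v := by
  classical
  obtain ⟨w₀, hw₀, hlen⟩ := lev_exists h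
  refine ⟨w₀.reverse, fun x hx => hw₀ x (by rwa [Walk.support_reverse, List.mem_reverse] at hx),
    fun x hx => ?_⟩
  rw [Walk.support_reverse, List.mem_reverse] at hx
  calc lev G S r x ≤ (w₀.takeUntil x hx).length :=
        lev_le _ (fun y hy => hw₀ y (Walk.support_takeUntil_subset _ _ hy))
    _ ≤ w₀.length := Walk.length_takeUntil_le _ _
    _ = lev G S r v := hlen

end Aux2

section Aux3

open SimpleGraph

set_option linter.unusedSectionVars false
set_option maxHeartbeats 1000000

variable {V : Type u} {Γ : Type v} [Fintype V] [AddCommGroup Γ]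
  {G : SimpleGraph V} {γ : Sym2 V → Γ} {A : Set Γ}

lemma isPath_append_of_junction {a b c : V} {p : G.Walk a b} {q : G.Walk b c}
    (hp : p.IsPath) (hq : q.IsPath)
    (h : ∀ v ∈ p.support, v ∈ q.support → v = b) : (p.append q).IsPath := by
  rw [Walk.isPath_def, Walk.support_append]
  refine List.Nodup.append hp.support_nodup ?_ ?_
  · exact hq.support_nodup.tail
  · intro v hvp hvq
    have hb : b ∉ q.support.tail := by
      have := hq.support_nodup
      rw [q.support_eq_cons] at this
      exact (List.nodup_cons.1 this).1
    have : v = b := h v hvp (q.support_eq_cons ▸ List.mem_cons_of_mem _ hvq)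
    exact hb (this ▸ hvq)

lemma exists_detour {S : Set V} {r x z : V} (hx : Reach G S r x) (hz : Reach G S r z)
    (hxz : x ≠ z) (hlev : lev G S r x = lev G S r z) (h1 : 0 < lev G S r x) :
    ∃ D : G.Walk x z, D.IsPath ∧ 2 ≤ D.length ∧ (∀ y ∈ D.support, y ∈ S) ∧
      ∀ y ∈ D.support, y ≠ x → y ≠ z → lev G S r y < lev G S r x := by
  classical
  obtain ⟨u, hxu, hru, hlevu⟩ := exists_parent hx h1
  obtain ⟨v', hzv, hrv, hlevv⟩ := exists_parent hz (hlev ▸ h1)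
  obtain ⟨wu, hwuS, hwulev⟩ := exists_descend hru
  obtain ⟨wv, hwvS, hwvlev⟩ := exists_descend hrv
  set ω : G.Walk u v' := wu.append wv.reverse with hω
  have hωprop : ∀ y ∈ ω.support, y ∈ S ∧ lev G S r y < lev G S r x := by
    intro y hy
    rcases (Walk.mem_support_append_iff _ _).1 hy with h | h
    · exact ⟨hwuS y h, by have := hwulev y h; omega⟩
    · rw [Walk.support_reverse, List.mem_reverse] at h
      exact ⟨hwvS y h, by have := hwvlev y h; omega⟩
  set m := ω.bypass with hm
  have hmsub : ∀ y ∈ m.support, y ∈ S ∧ lev G S r y < lev G S r x :=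
    fun y hy => hωprop y (Walk.support_bypass_subset _ hy)
  have hxm : x ∉ m.support := fun h => absurd (hmsub x h).2 (by omega)
  have hzm : z ∉ m.support := fun h => absurd (hmsub z h).2 (by omega)
  refine ⟨Walk.cons hxu (m.concat hzv.symm), ?_, ?_, ?_, ?_⟩
  · rw [Walk.isPath_def, Walk.support_cons, Walk.support_concat]
    rw [List.nodup_cons]
    constructor
    · rw [List.mem_append]
      rintro (h | h)
      · exact hxm h
      · simp at h; exact hxz h
    · refine List.Nodup.append ω.bypass_isPath.support_nodup (by simp) ?_
      intro y hym hyz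
      simp at hyz; subst hyz
      exact hzm hym
  · rw [Walk.length_cons, Walk.length_concat]; omega
  · intro y hy
    rw [Walk.support_cons, List.mem_cons] at hy
    rcases hy with rfl | hy
    · exact hx.mem_right
    · rw [Walk.support_concat, List.mem_append] at hy
      rcases hy with hy | hy
      · exact (hmsub y hy).1
      · simp at hy; subst hy; exact hz.mem_right
  · intro y hy hyx hyz
    rw [Walk.support_cons, List.mem_cons] at hy
    rcases hy with rfl | hy
    · exact absurd rfl hyx
    · rw [Walk.support_concat, List.mem_append] at hy
      rcases hy with hy | hy
      · exact (hmsub y hy).2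
      · simp at hy; exact absurd hy hyz

lemma walk_lev_const {S P : Set V} {r : V} {Y : Set V}
    (hYP : Y ⊆ P) (hPlev : ∀ u ∈ P, ∀ v ∈ P, G.Adj u v → lev G S r u = lev G S r v) :
    ∀ {u w : V} (ω : G.Walk u w), (∀ x ∈ ω.support, x ∈ Y) → lev G S r u = lev G S r w := by
  intro u w ω
  induction ω with
  | nil => intro _; rfl
  | @cons a b c hadj p ih =>
    intro hsup
    have hab : lev G S r a = lev G S r b := by
      refine hPlev a (hYP (hsup a ?_)) b (hYP (hsup b ?_)) hadj
      · simp [Walk.support_cons]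
      · simp [Walk.support_cons, p.start_mem_support]
    exact hab.trans (ih (fun y hy => hsup y (by simp [Walk.support_cons]; right; exact hy)))

lemma parity_eq {a b : ℕ} (h1 : a ≤ b + 1) (h2 : b ≤ a + 1) (hp : (Even a ↔ Even b)) :
    a = b := by
  rw [Nat.even_iff, Nat.even_iff] at hp
  omega

lemma halving [Nonempty V] {S : Set V} (hne : S.Nonempty)
    (hconn : ∀ u ∈ S, ∀ v ∈ S, Reach G S u v) :
    ∃ Y, Y ⊆ S ∧ Y.Nonempty ∧ (∀ u ∈ Y, ∀ v ∈ Y, Reach G Y u v) ∧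
      arbOn G γ A S ≤ 2 * arbOn G γ A Y ∧
      ∀ x ∈ Y, ∀ z ∈ Y, x ≠ z → ∃ D : G.Walk x z, D.IsPath ∧ 2 ≤ D.length ∧
        (∀ y ∈ D.support, y ∈ S) ∧ ∀ y ∈ D.support, y ≠ x → y ≠ z → y ∉ Y := by
  classical
  obtain ⟨r, hr⟩ := hne
  have hreach : ∀ v ∈ S, Reach G S r v := fun v hv => hconn r hr v hv
  set E := {v | v ∈ S ∧ Even (lev G S r v)} with hE
  set O := {v | v ∈ S ∧ ¬ Even (lev G S r v)} with hO
  have hEO : S = E ∪ O := by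
    ext v; constructor
    · intro hv; by_cases h : Even (lev G S r v)
      · exact Or.inl ⟨hv, h⟩
      · exact Or.inr ⟨hv, h⟩
    · rintro (⟨h, -⟩ | ⟨h, -⟩) <;> exact h
  have hsum : arbOn G γ A S ≤ arbOn G γ A E + arbOn G γ A O := by
    rw [hEO]; exact arbOn_union_le E O
  have hadjlev : ∀ u ∈ S, ∀ v ∈ S, G.Adj u v →
      (Even (lev G S r u) ↔ Even (lev G S r v)) → lev G S r u = lev G S r v := by
    intro u hu v hv hadj hpar
    exact parity_eq (lev_adj (hreach v hv) hu hadj.symm) (lev_adj (hreach u hu) hv hadj) hpar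
  -- choose the parity class
  have hP : ∃ P : Set V, P ⊆ S ∧ P.Nonempty ∧
      (∀ u ∈ P, ∀ v ∈ P, G.Adj u v → lev G S r u = lev G S r v) ∧
      arbOn G γ A S ≤ 2 * arbOn G γ A P := by
    by_cases hcmp : arbOn G γ A O ≤ arbOn G γ A E
    · refine ⟨E, fun v hv => hv.1, ⟨r, hr, by simp [lev_self hr]⟩, ?_, by omega⟩
      intro u hu v hv hadj
      exact hadjlev u hu.1 v hv.1 hadj (by constructor <;> intro <;> [exact hv.2; exact hu.2])
    · push_neg at hcmp
      have hOne : O.Nonempty := by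
        by_contra h
        rw [Set.not_nonempty_iff_eq_empty] at h
        have : arbOn G γ A O ≤ 1 := arbOn_subsingleton_le_one O (by rw [h]; exact Set.subsingleton_empty)
        have : 0 < arbOn G γ A E := arbOn_pos E
        omega
      refine ⟨O, fun v hv => hv.1, hOne, ?_, by omega⟩
      intro u hu v hv hadj
      exact hadjlev u hu.1 v hv.1 hadj (by constructor <;> intro h <;> [exact absurd h hu.2; exact absurd h hv.2])
  obtain ⟨P, hPS, hPne, hPlev, hP2⟩ := hP
  obtain ⟨Y, hYP, hYne, hYconn, hYarb⟩ := exists_component (γ := γ) (A := A) hPne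
  have hYS : Y ⊆ S := fun v hv => hPS (hYP hv)
  refine ⟨Y, hYS, hYne, hYconn, by omega, ?_⟩
  intro x hx z hz hxz
  have hlevxz : lev G S r x = lev G S r z := by
    obtain ⟨ω, hω⟩ := hYconn x hx z hz
    exact walk_lev_const hYP hPlev ω hω
  have hpos : 0 < lev G S r x := by
    rcases Nat.eq_zero_or_pos (lev G S r x) with h0 | h
    · exfalso
      have hxr : x = r := eq_of_lev_zero (hreach x (hYS hx)) h0
      have hzr : z = r := eq_of_lev_zero (hreach z (hYS hz)) (by omega)
      exact hxz (hxr.trans hzr.symm)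
    · exact h
  obtain ⟨D, hD1, hD2, hD3, hD4⟩ :=
    exists_detour (hreach x (hYS hx)) (hreach z (hYS hz)) hxz hlevxz hpos
  refine ⟨D, hD1, hD2, hD3, fun y hy hyx hyz hyY => ?_⟩
  have h5 := hD4 y hy hyx hyz
  have h6 : lev G S r y = lev G S r x := by
    obtain ⟨ω, hω⟩ := hYconn y hyY x hx
    exact walk_lev_const hYP hPlev ω hω
  omega

end Aux3

section Aux4

open SimpleGraph

set_option linter.unusedSectionVars false
set_option maxHeartbeats 1000000

variable {V : Type u} {Γ : Type v} [Fintype V] [AddCommGroup Γ]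
  {G : SimpleGraph V} {γ : Sym2 V → Γ} {A : Set Γ}

lemma key_induction [Nonempty V] : ∀ ℓ : ℕ, 1 ≤ ℓ → ∀ S : Set V, S.Nonempty →
    (∀ u ∈ S, ∀ v ∈ S, Reach G S u v) → 2 ^ ℓ ≤ arbOn G γ A S →
    ∃ X, X ⊆ S ∧ X.Nonempty ∧ (∀ u ∈ X, ∀ v ∈ X, Reach G X u v) ∧
      arbOn G γ A S ≤ 2 ^ ℓ * arbOn G γ A X ∧
      ∀ x ∈ X, ∀ y ∈ X, x ≠ y → ∃ w : G.Walk x y, w.IsPath ∧ 2 ≤ w.length ∧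
        ℓ ≤ w.length ∧ (∀ v ∈ w.support, v ∈ S) ∧
        ∀ v ∈ w.support, v ≠ x → v ≠ y → v ∉ X := by
  intro ℓ hℓ
  induction ℓ, hℓ using Nat.le_induction with
  | base =>
    intro S hne hconn _
    obtain ⟨Y, hYS, hYne, hYconn, hY2, hYpaths⟩ := halving (γ := γ) (A := A) hne hconn
    refine ⟨Y, hYS, hYne, hYconn, by omega, ?_⟩
    intro x hx y hy hxy
    obtain ⟨D, hD1, hD2, hD3, hD4⟩ := hYpaths x hx y hy hxy
    exact ⟨D, hD1, hD2, by omega, hD3, hD4⟩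
  | succ ℓ hℓ ih =>
    intro S hne hconn harb
    obtain ⟨Y, hYS, hYne, hYconn, hY2, hYpaths⟩ := halving (γ := γ) (A := A) hne hconn
    have harbY : 2 ^ ℓ ≤ arbOn G γ A Y := by
      rw [pow_succ] at harb; omega
    obtain ⟨X, hXY, hXne, hXconn, hXarb, hXpaths⟩ := ih Y hYne hYconn harbY
    refine ⟨X, fun v hv => hYS (hXY hv), hXne, hXconn, ?_, ?_⟩
    · rw [pow_succ]
      calc arbOn G γ A S ≤ 2 * arbOn G γ A Y := hY2
        _ ≤ 2 * (2 ^ ℓ * arbOn G γ A X) := by omega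
        _ = 2 ^ ℓ * 2 * arbOn G γ A X := by ring
    · intro x hx y hy hxy
      obtain ⟨w, hwp, hw2, hwl, hwY, hwint⟩ := hXpaths x hx y hy hxy
      cases w with
      | nil => simp at hw2
      | @cons _ z _ hadj w' =>
        have hzY : z ∈ Y := hwY z (by simp [Walk.support_cons, w'.start_mem_support])
        have hxz : x ≠ z := hadj.ne
        have hw'len : (Walk.cons hadj w').length = w'.length + 1 := Walk.length_cons _ _
        have hzy : z ≠ y := by
          intro h
          subst h
          have hp' : w'.IsPath := hwp.of_cons
          rw [Walk.isPath_iff_eq_nil] at hp'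
          subst hp'
          simp at hw2
        have hznX : z ∉ X := hwint z (by simp [Walk.support_cons, w'.start_mem_support]) hxz.symm hzy
        have hxw' : x ∉ w'.support := ((Walk.cons_isPath_iff _ _).1 hwp).2
        have hw'path : w'.IsPath := hwp.of_cons
        have hw'Y : ∀ v ∈ w'.support, v ∈ Y := fun v hv =>
          hwY v (by simp [Walk.support_cons]; right; exact hv)
        obtain ⟨D, hD1, hD2, hD3, hD4⟩ := hYpaths x (hXY hx) z hzY hxz
        refine ⟨D.append w', ?_, ?_, ?_, ?_, ?_⟩
        · refine isPath_append_of_junction hD1 hw'path ?_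
          intro v hvD hvw'
          by_cases hvz : v = z
          · exact hvz
          · by_cases hvx : v = x
            · exact absurd (hvx ▸ hvw') hxw'
            · exact absurd (hw'Y v hvw') (hD4 v hvD hvx hvz)
        · rw [Walk.length_append]; omega
        · rw [Walk.length_append]
          rw [hw'len] at hwl
          omega
        · intro v hv
          rcases (Walk.mem_support_append_iff _ _).1 hv with h | h
          · exact hD3 v h
          · exact hYS (hw'Y v h)
        · intro v hv hvx hvy
          rcases (Walk.mem_support_append_iff _ _).1 hv with h | h
          · by_cases hvz : v = z
            · exact hvz ▸ hznX
            · exact fun hvX => (hD4 v h hvx hvz) (hXY hvX)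
          · refine hwint v ?_ hvx hvy
            simp [Walk.support_cons]
            right
            exact h

end Aux4

theorem statement9 (ℓ : ℕ) (hℓ : 0 < ℓ)
    (Γ : Type v) [AddCommGroup Γ] (A : Set Γ) (hA : A.Nonempty)
    (V : Type u) [Fintype V] (G : SimpleGraph V) (γ : Sym2 V → Γ)
    (hG : G.Connected) (harb : 2 ^ ℓ ≤ arb G γ A) :
    ∃ X : Set V, (G.induce X).Connected ∧
      (arb G γ A : ℝ) / 2 ^ ℓ ≤ (arbOn G γ A X : ℝ) ∧
      ∀ x ∈ X, ∀ y ∈ X, x ≠ y →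
        ∃ w : G.Walk x y, IsXPathIn G X Set.univ w ∧ ℓ ≤ w.length := by
  have hV : Nonempty V := hG.nonempty
  have hconn : ∀ u ∈ (Set.univ : Set V), ∀ v ∈ (Set.univ : Set V), Reach G Set.univ u v := by
    intro u _ v _
    obtain ⟨w⟩ := hG.preconnected u v
    exact ⟨w, fun x _ => trivial⟩
  obtain ⟨X, hXs, hXne, hXconn, hXarb, hXpaths⟩ :=
    key_induction (γ := γ) (A := A) ℓ hℓ Set.univ ⟨Classical.arbitrary V, trivial⟩ hconn harb
  refine ⟨X, ?_, ?_, ?_⟩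
  · exact induce_connected_iff'.2 ⟨hXne, hXconn⟩
  · rw [div_le_iff₀ (by positivity)]
    have h : (arb G γ A : ℝ) ≤ ((2 ^ ℓ * arbOn G γ A X : ℕ) : ℝ) := by exact_mod_cast hXarb
    push_cast at h ⊢
    linarith
  · intro x hx y hy hxy
    obtain ⟨w, hp, h2, hl, hS, hint⟩ := hXpaths x hx y hy hxy
    exact ⟨w, ⟨hp, h2, hx, hy, fun v _ => trivial, hint⟩, hl⟩

end ArbPaper
end

section
/- Let d, t, q, ω be positive integers with q = t + C(t,2)·ω, where C(t,2) denotes the binomial coefficient. Let Γ be an abelian group, let A ⊆ Γ be a non-empty set with |Γ \ A| ≤ ω, and let g ∈ Γ \ A be such that ⟨g⟩ ∩ A ≠ ∅, where ⟨g⟩ is the cyclic subgroup generated by g. Let (H, γ) be a Γ-labelled graph that is a subdivision of K_q whose branching paths all have γ-value g and length at least d. Then H contains an (A, d)-subdivision of K_t. -/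
namespace ArbPaper

universe u v

section Auxiliary

open SimpleGraph

variable {V : Type u} {Γ : Type v} [AddCommGroup Γ] {G : SimpleGraph V}

lemma walkVal_append (γ : Sym2 V → Γ) {x y z : V} (p : G.Walk x y) (q : G.Walk y z) :
    walkVal γ (p.append q) = walkVal γ p + walkVal γ q := by
  simp [walkVal, Walk.edges_append]

lemma walkVal_reverse (γ : Sym2 V → Γ) {x y : V} (p : G.Walk x y) :
    walkVal γ p.reverse = walkVal γ p := by
  simp [walkVal, Walk.edges_reverse, List.map_reverse, List.sum_reverse]

lemma walkVal_copy (γ : Sym2 V → Γ) {x y x' y' : V} (p : G.Walk x y) (h1 : x = x') (h2 : y = y') :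
    walkVal γ (p.copy h1 h2) = walkVal γ p := by
  subst h1; subst h2; rfl

lemma isPath_append' {a c e : V} {p : G.Walk a c} {q : G.Walk c e}
    (hp : p.IsPath) (hq : q.IsPath)
    (h : ∀ v, v ∈ p.support → v ∈ q.support → v = c) : (p.append q).IsPath := by
  rw [Walk.isPath_def] at hp hq ⊢
  rw [Walk.support_append]
  refine hp.append ?_ ?_
  · exact (List.nodup_cons.mp (q.support_eq_cons ▸ hq)).2
  · intro v hv hv'
    have hvq : v ∈ q.support := List.mem_of_mem_tail hv'
    have hvc : v = c := h v hv hvq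
    subst hvc
    have hnd := q.support_eq_cons ▸ hq
    exact (List.nodup_cons.mp hnd).1 hv'

/-- Concatenation of a chain of walks. -/
def chainWalk (f : ℕ → V) (Pk : ∀ k : ℕ, G.Walk (f k) (f (k+1))) : ∀ n : ℕ, G.Walk (f 0) (f n)
  | 0 => Walk.nil
  | n+1 => (chainWalk f Pk n).append (Pk n)

lemma chainWalk_mem_support (f : ℕ → V) (Pk : ∀ k : ℕ, G.Walk (f k) (f (k+1))) :
    ∀ n : ℕ, 1 ≤ n → ∀ v, (v ∈ (chainWalk f Pk n).support ↔ ∃ k, k < n ∧ v ∈ (Pk k).support)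
  | 0 => by omega
  | 1 => by
      intro _ v
      constructor
      · intro hv
        rw [chainWalk, Walk.mem_support_append_iff] at hv
        rcases hv with hv | hv
        · have hvf : v = f 0 := by simpa [chainWalk] using hv
          exact ⟨0, by omega, hvf ▸ (Pk 0).start_mem_support⟩
        · exact ⟨0, by omega, hv⟩
      · rintro ⟨k, hk, hv⟩
        have hk0 : k = 0 := by omega
        subst hk0
        rw [chainWalk, Walk.mem_support_append_iff]
        exact Or.inr hv
  | (n+2) => by
      intro _ v
      rw [chainWalk, Walk.mem_support_append_iff,
        chainWalk_mem_support f Pk (n+1) (by omega) v]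
      constructor
      · rintro (⟨k, hk, hv⟩ | hv)
        · exact ⟨k, by omega, hv⟩
        · exact ⟨n+1, by omega, hv⟩
      · rintro ⟨k, hk, hv⟩
        rcases Nat.lt_or_ge k (n+1) with h | h
        · exact Or.inl ⟨k, h, hv⟩
        · have hkn : k = n+1 := by omega
          subst hkn; exact Or.inr hv

lemma chainWalk_isPath (f : ℕ → V) (Pk : ∀ k : ℕ, G.Walk (f k) (f (k+1))) (n : ℕ)
    (hn : 1 ≤ n)
    (H1 : ∀ k < n, (Pk k).IsPath)
    (H2 : ∀ k l, k < l → l < n → ∀ v, v ∈ (Pk k).support → v ∈ (Pk l).support →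
      l = k + 1 ∧ v = f l) : (chainWalk f Pk n).IsPath := by
  induction n with
  | zero => omega
  | succ n ih =>
    rcases Nat.eq_zero_or_pos n with h | h
    · subst h
      simpa [chainWalk] using H1 0 (by omega)
    · rw [chainWalk]
      refine isPath_append' (ih h (fun k hk => H1 k (by omega))
        (fun k l hkl hl v h1 h2 => H2 k l hkl (by omega) v h1 h2)) (H1 n (by omega)) ?_
      intro v hv hv'
      rw [chainWalk_mem_support f Pk n h v] at hv
      obtain ⟨k, hk, hvk⟩ := hv
      exact (H2 k n hk (by omega) v hvk hv').2

lemma chainWalk_val (γ : Sym2 V → Γ) (f : ℕ → V) (Pk : ∀ k : ℕ, G.Walk (f k) (f (k+1)))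
    (g : Γ) (n : ℕ) (h : ∀ k < n, walkVal γ (Pk k) = g) :
    walkVal γ (chainWalk f Pk n) = n • g := by
  induction n with
  | zero => simp [chainWalk, walkVal]
  | succ n ih =>
    rw [chainWalk, walkVal_append, ih (fun k hk => h k (by omega)), h n (by omega),
      succ_nsmul]

lemma chainWalk_length (f : ℕ → V) (Pk : ∀ k : ℕ, G.Walk (f k) (f (k+1)))
    (d : ℕ) (n : ℕ) (h : ∀ k < n, d ≤ (Pk k).length) :
    n * d ≤ (chainWalk f Pk n).length := by
  induction n with
  | zero => simp
  | succ n ih =>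
    rw [chainWalk, Walk.length_append, Nat.succ_mul]
    exact Nat.add_le_add (ih (fun k hk => h k (by omega))) (h n (by omega))

lemma exists_good_multiple {Γ' : Type v} [AddCommGroup Γ'] (A : Set Γ') (ω : ℕ)
    (hcard : (Aᶜ : Set Γ').encard ≤ (ω : ℕ∞)) (g : Γ')
    (hgen : ((AddSubgroup.zmultiples g : Set Γ') ∩ A).Nonempty) :
    ∃ m : ℕ, 1 ≤ m ∧ m ≤ ω + 1 ∧ m • g ∈ A := by
  by_contra hcon
  push_neg at hcon
  obtain ⟨a, ha1, ha2⟩ := hgen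
  obtain ⟨z, hz⟩ := AddSubgroup.mem_zmultiples_iff.mp ha1
  have key : ∀ k l : Fin (ω+1), (k : ℕ) < (l : ℕ) →
      ((k : ℕ)+1) • g = ((l : ℕ)+1) • g → False := by
    intro k l hlt hkl
    set e : ℕ := (l : ℕ) - (k : ℕ) with he
    have he1 : 1 ≤ e := by omega
    have heω : e ≤ ω := by omega
    have heg : e • g = 0 := by
      have h' : ((k:ℕ)+1) • g + (e • g) = ((l:ℕ)+1) • g := by
        rw [← add_nsmul]; congr 1; omega
      rw [hkl] at h'
      exact add_left_cancel (a := ((l:ℕ)+1) • g) (by rw [add_zero]; exact h')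
    have hze : (e : ℤ) • g = 0 := by rw [natCast_zsmul, heg]
    set r : ℤ := z % (e : ℤ) with hr
    have her : (0:ℤ) < (e:ℤ) := by exact_mod_cast he1
    have hr0 : 0 ≤ r := Int.emod_nonneg z (by omega)
    have hrlt : r < (e:ℤ) := Int.emod_lt_of_pos z her
    have hzg : z • g = r • g := by
      have hdm : z = (e : ℤ) * (z / (e:ℤ)) + r := (Int.mul_ediv_add_emod z (e:ℤ)).symm
      rw [hdm, add_zsmul, mul_comm, mul_zsmul, hze, smul_zero, zero_add]
    rcases eq_or_lt_of_le hr0 with h0 | h0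
    · have h0A : (0:Γ') ∈ A := by rwa [← hz, hzg, ← h0, zero_zsmul] at ha2
      exact hcon e he1 (by omega) (by rwa [heg])
    · have hrg : r.toNat • g = z • g := by
        rw [← natCast_zsmul, Int.toNat_of_nonneg hr0, hzg]
      refine hcon r.toNat (by omega) (by omega) ?_
      rw [hrg, hz]; exact ha2
  have hinj : Function.Injective (fun k : Fin (ω+1) => ((k : ℕ)+1) • g) := by
    intro k l hkl
    by_contra hne
    simp only at hkl
    rcases Nat.lt_trichotomy (k : ℕ) (l : ℕ) with h | h | h
    · exact key k l h hkl
    · exact hne (Fin.ext h)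
    · exact key l k h hkl.symm
  have hsub : Set.range (fun k : Fin (ω+1) => ((k : ℕ)+1) • g) ⊆ Aᶜ := by
    rintro x ⟨k, rfl⟩
    exact hcon ((k:ℕ)+1) (by omega) (by omega)
  have h1 : (Set.range (fun k : Fin (ω+1) => ((k : ℕ)+1) • g)).encard = ((ω+1 : ℕ) : ℕ∞) := by
    rw [← Set.image_univ, Set.InjOn.encard_image (hinj.injOn)]
    simp [Set.encard_univ]
  have h2 := le_trans (le_of_eq h1.symm) (le_trans (Set.encard_mono hsub) hcard)
  have h3 : (ω + 1 : ℕ) ≤ (ω : ℕ) := by exact_mod_cast h2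
  omega

/-- Index of the unordered pair `{i, j}` among the `t.choose 2` two-element subsets. -/
noncomputable def pairIdx {t : ℕ} (i j : Fin t) (h : i ≠ j) : Fin (t.choose 2) :=
  (Fintype.equivFinOfCardEq
    (by rw [Fintype.card_finset_len, Fintype.card_fin] :
      Fintype.card {s : Finset (Fin t) // s.card = 2} = t.choose 2))
    ⟨({i, j} : Finset (Fin t)), Finset.card_pair h⟩

lemma pairIdx_inj {t : ℕ} {i j k l : Fin t} (h : i ≠ j) (h' : k ≠ l)
    (heq : pairIdx i j h = pairIdx k l h') : ({i, j} : Finset (Fin t)) = {k, l} := by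
  have h2 := (Fintype.equivFinOfCardEq
    (by rw [Fintype.card_finset_len, Fintype.card_fin] :
      Fintype.card {s : Finset (Fin t) // s.card = 2} = t.choose 2)).injective heq
  exact congrArg Subtype.val h2

/-- The `k`-th interior branching vertex dedicated to the pair `{i, j}`. -/
noncomputable def mid (t ω : ℕ) (i j : Fin t) (h : i ≠ j) (k : ℕ) (hk : k < ω) :
    Fin (t + t.choose 2 * ω) :=
  ⟨t + (pairIdx i j h : ℕ) * ω + k, by
    have h1 : (pairIdx i j h : ℕ) < t.choose 2 := (pairIdx i j h).isLt
    have h2 : ((pairIdx i j h : ℕ) + 1) * ω ≤ t.choose 2 * ω :=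
      Nat.mul_le_mul_right _ (by omega)
    have h3 : (pairIdx i j h : ℕ) * ω + k < ((pairIdx i j h : ℕ) + 1) * ω := by
      rw [Nat.succ_mul]; omega
    omega⟩

lemma mid_val_ge (t ω : ℕ) (i j : Fin t) (h : i ≠ j) (k : ℕ) (hk : k < ω) :
    t ≤ (mid t ω i j h k hk : ℕ) := by
  simp only [mid]
  omega

lemma mid_inj {t ω : ℕ} {i j i' j' : Fin t} {h : i ≠ j} {h' : i' ≠ j'} {k k' : ℕ}
    {hk : k < ω} {hk' : k' < ω}
    (heq : mid t ω i j h k hk = mid t ω i' j' h' k' hk') :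
    ({i, j} : Finset (Fin t)) = {i', j'} ∧ k = k' := by
  have hval : t + (pairIdx i j h : ℕ) * ω + k = t + (pairIdx i' j' h' : ℕ) * ω + k' :=
    congrArg Fin.val heq
  have hω : 0 < ω := lt_of_le_of_lt (Nat.zero_le k) hk
  have h1 : (pairIdx i j h : ℕ) * ω + k = (pairIdx i' j' h' : ℕ) * ω + k' := by omega
  have h2 : (pairIdx i j h : ℕ) = (pairIdx i' j' h' : ℕ) := by
    have e1 : ((pairIdx i j h : ℕ) * ω + k) / ω = (pairIdx i j h : ℕ) := by
      rw [mul_comm, Nat.mul_add_div hω, Nat.div_eq_of_lt hk, add_zero]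
    have e2 : ((pairIdx i' j' h' : ℕ) * ω + k') / ω = (pairIdx i' j' h' : ℕ) := by
      rw [mul_comm, Nat.mul_add_div hω, Nat.div_eq_of_lt hk', add_zero]
    rw [← e1, ← e2, h1]
  have h3 : k = k' := by rw [h2] at h1; omega
  exact ⟨pairIdx_inj h h' (Fin.ext h2), h3⟩

/-- Normalized branching path between arbitrary branching vertices. -/
def Pe {q : ℕ} (b : Fin q → V)
    (P : ∀ i j : Fin q, G.Walk (b i) (b j)) (x y : Fin q) : G.Walk (b x) (b y) :=
  if h : x < y then P x y
  else if h' : y < x then (P y x).reverse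
  else Walk.nil.copy rfl (congrArg b (le_antisymm (not_lt.mp h') (not_lt.mp h)))

lemma Pe_lt {q : ℕ} (b : Fin q → V)
    (P : ∀ i j : Fin q, G.Walk (b i) (b j)) {x y : Fin q} (h : x < y) :
    Pe b P x y = P x y := dif_pos h

lemma Pe_gt {q : ℕ} (b : Fin q → V)
    (P : ∀ i j : Fin q, G.Walk (b i) (b j)) {x y : Fin q} (h : y < x) :
    Pe b P x y = (P y x).reverse := by
  rw [Pe, dif_neg (asymm h), dif_pos h]

/-- The `k`-th vertex of the chain of branching vertices dedicated to the pair `(i, j)`. -/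
noncomputable def chainVert (t ω m : ℕ) (hm : m ≤ ω + 1) (i j : Fin t) (hij : i ≠ j)
    (k : ℕ) : Fin (t + t.choose 2 * ω) :=
  if h0 : k = 0 then Fin.castLE (Nat.le_add_right _ _) i
  else if hk : k < m then mid t ω i j hij (k-1) (by omega)
  else Fin.castLE (Nat.le_add_right _ _) j

lemma chainVert_zero (t ω m : ℕ) (hm : m ≤ ω + 1) (i j : Fin t) (hij : i ≠ j) :
    chainVert t ω m hm i j hij 0 = Fin.castLE (Nat.le_add_right _ _) i := by
  simp [chainVert]

lemma chainVert_last (t ω m : ℕ) (hm : m ≤ ω + 1) (hm1 : 1 ≤ m) (i j : Fin t) (hij : i ≠ j) :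
    chainVert t ω m hm i j hij m = Fin.castLE (Nat.le_add_right _ _) j := by
  unfold chainVert
  rw [dif_neg (by omega), dif_neg (by omega)]

lemma chainVert_eq_castLE {t ω m : ℕ} {hm : m ≤ ω + 1} {i j : Fin t} {hij : i ≠ j}
    {k : ℕ} {s : Fin t} (hk : k ≤ m)
    (h : chainVert t ω m hm i j hij k = Fin.castLE (Nat.le_add_right _ _) s) :
    (k = 0 ∧ s = i) ∨ (k = m ∧ s = j) := by
  unfold chainVert at h
  split_ifs at h with h0 h1
  · exact Or.inl ⟨h0, (Fin.castLE_injective _ h).symm⟩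
  · exfalso
    have hv := congrArg Fin.val h
    have hge := mid_val_ge t ω i j hij (k-1) (by omega)
    rw [hv] at hge
    simp only [Fin.coe_castLE] at hge
    exact absurd hge (not_le.mpr s.isLt)
  · exact Or.inr ⟨by omega, (Fin.castLE_injective _ h).symm⟩

lemma chainVert_inj {t ω m : ℕ} {hm : m ≤ ω + 1} {i j : Fin t} {hij : i ≠ j}
    {k l : ℕ} (hk : k ≤ m) (hl : l ≤ m)
    (h : chainVert t ω m hm i j hij k = chainVert t ω m hm i j hij l) : k = l := by
  unfold chainVert at h
  split_ifs at h with h1 h2 h3 h4 h5 h6 h7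
  · omega
  · exfalso
    have hv := congrArg Fin.val h
    have hge := mid_val_ge t ω i j hij (l-1) (by omega)
    rw [← hv] at hge
    simp only [Fin.coe_castLE] at hge
    exact absurd hge (not_le.mpr i.isLt)
  · exact absurd (Fin.castLE_injective _ h) hij
  · exfalso
    have hv := congrArg Fin.val h
    have hge := mid_val_ge t ω i j hij (k-1) (by omega)
    rw [hv] at hge
    simp only [Fin.coe_castLE] at hge
    exact absurd hge (not_le.mpr i.isLt)
  · have := (mid_inj h).2; omega
  · exfalso
    have hv := congrArg Fin.val h
    have hge := mid_val_ge t ω i j hij (k-1) (by omega)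
    rw [hv] at hge
    simp only [Fin.coe_castLE] at hge
    exact absurd hge (not_le.mpr j.isLt)
  · exact absurd (Fin.castLE_injective _ h).symm hij
  · exfalso
    have hv := congrArg Fin.val h
    have hge := mid_val_ge t ω i j hij (l-1) (by omega)
    rw [← hv] at hge
    simp only [Fin.coe_castLE] at hge
    exact absurd hge (not_le.mpr j.isLt)
  · omega

lemma chainVert_cross {t ω m : ℕ} {hm : m ≤ ω + 1} {i j i' j' : Fin t}
    {hij : i ≠ j} {hij' : i' ≠ j'} {k k' : ℕ} (hk : k ≤ m) (hk' : k' ≤ m)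
    (hpair : ({i, j} : Finset (Fin t)) ≠ {i', j'})
    (h : chainVert t ω m hm i j hij k = chainVert t ω m hm i' j' hij' k') :
    ∃ u : Fin t, (u = i ∨ u = j) ∧ (u = i' ∨ u = j') ∧
      chainVert t ω m hm i j hij k = Fin.castLE (Nat.le_add_right _ _) u := by
  have hcast : ∀ (s s' : Fin t), (Fin.castLE (Nat.le_add_right t (t.choose 2 * ω)) s =
      Fin.castLE (Nat.le_add_right t (t.choose 2 * ω)) s') → s = s' :=
    fun s s' hss => Fin.castLE_injective _ hss
  unfold chainVert at h ⊢
  split_ifs at h ⊢ with h1 h2 h3 h4 h5 h6 h7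
  · exact ⟨i, Or.inl rfl, Or.inl (hcast _ _ h), rfl⟩
  · exfalso
    have hv := congrArg Fin.val h
    have hge := mid_val_ge t ω i' j' hij' (k'-1) (by omega)
    rw [← hv] at hge
    simp only [Fin.coe_castLE] at hge
    exact absurd hge (not_le.mpr i.isLt)
  · exact ⟨i, Or.inl rfl, Or.inr (hcast _ _ h), rfl⟩
  · exfalso
    have hv := congrArg Fin.val h
    have hge := mid_val_ge t ω i j hij (k-1) (by omega)
    rw [hv] at hge
    simp only [Fin.coe_castLE] at hge
    exact absurd hge (not_le.mpr i'.isLt)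
  · exact absurd (mid_inj h).1 hpair
  · exfalso
    have hv := congrArg Fin.val h
    have hge := mid_val_ge t ω i j hij (k-1) (by omega)
    rw [hv] at hge
    simp only [Fin.coe_castLE] at hge
    exact absurd hge (not_le.mpr j'.isLt)
  · exact ⟨j, Or.inr rfl, Or.inl (hcast _ _ h), rfl⟩
  · exfalso
    have hv := congrArg Fin.val h
    have hge := mid_val_ge t ω i' j' hij' (k'-1) (by omega)
    rw [← hv] at hge
    simp only [Fin.coe_castLE] at hge
    exact absurd hge (not_le.mpr j.isLt)
  · exact ⟨j, Or.inr rfl, Or.inr (hcast _ _ h), rfl⟩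

/-- Extend a family of walks indexed by ordered pairs to all pairs. -/
def symWalks {t : ℕ} (b : Fin t → V)
    (W : ∀ i j : Fin t, i < j → G.Walk (b i) (b j)) (i j : Fin t) : G.Walk (b i) (b j) :=
  if h : i < j then W i j h
  else if h' : j < i then (W j i h').reverse
  else Walk.nil.copy rfl (congrArg b (le_antisymm (not_lt.mp h') (not_lt.mp h)))

lemma symWalks_of_lt {t : ℕ} (b : Fin t → V)
    (W : ∀ i j : Fin t, i < j → G.Walk (b i) (b j)) {i j : Fin t} (h : i < j) :
    symWalks b W i j = W i j h := dif_pos h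

end Auxiliary


theorem statement14 (d t q ω : ℕ) (hd : 0 < d) (ht : 0 < t) (hq : 0 < q)
    (hω : 0 < ω) (hqe : q = t + t.choose 2 * ω)
    (Γ : Type v) [AddCommGroup Γ] (A : Set Γ) (hA : A.Nonempty)
    (hcard : (Aᶜ : Set Γ).encard ≤ (ω : ℕ∞))
    (g : Γ) (hg : g ∉ A)
    (hgen : ((AddSubgroup.zmultiples g : Set Γ) ∩ A).Nonempty)
    (V : Type u) [Fintype V] (H : SimpleGraph V) (γ : Sym2 V → Γ)
    (b : Fin q → V) (P : ∀ i j : Fin q, H.Walk (b i) (b j))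
    (hsub : IsSpanningKtSubdivision H q b P)
    (hpaths : ∀ i j : Fin q, i < j →
      walkVal γ (P i j) = g ∧ d ≤ (P i j).length) :
    ContainsADSubdivision H γ A t d := by
  classical
  subst hqe
  obtain ⟨⟨binj, hPpath, hPbr, hPdisj⟩, -, -⟩ := hsub
  obtain ⟨m, hm1, hmω, hmA⟩ := exists_good_multiple A ω hcard g hgen
  have hm2 : 2 ≤ m := by
    rcases Nat.lt_or_ge m 2 with h | h
    · have hm1' : m = 1 := by omega
      subst hm1'
      rw [one_nsmul] at hmA
      exact absurd hmA hg
    · exact h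
  have htq : t ≤ t + t.choose 2 * ω := Nat.le_add_right _ _
  -- the normalized-path API
  have norm : ∀ x y : Fin (t + t.choose 2 * ω), x ≠ y → ∃ x0 y0, x0 < y0 ∧
      ((x0 = x ∧ y0 = y) ∨ (x0 = y ∧ y0 = x)) ∧
      ∀ v, v ∈ (Pe b P x y).support ↔ v ∈ (P x0 y0).support := by
    intro x y hxy
    rcases lt_trichotomy x y with h | h | h
    · exact ⟨x, y, h, Or.inl ⟨rfl, rfl⟩, fun v => by rw [Pe_lt b P h]⟩
    · exact absurd h hxy
    · exact ⟨y, x, h, Or.inr ⟨rfl, rfl⟩, fun v => by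
        rw [Pe_gt b P h, SimpleGraph.Walk.support_reverse, List.mem_reverse]⟩
  have PeIsPath : ∀ x y, x ≠ y → (Pe b P x y).IsPath := by
    intro x y hxy
    rcases lt_trichotomy x y with h | h | h
    · rw [Pe_lt b P h]; exact hPpath x y h
    · exact absurd h hxy
    · rw [Pe_gt b P h]; exact (hPpath y x h).reverse
  have PeVal : ∀ x y, x ≠ y → walkVal γ (Pe b P x y) = g := by
    intro x y hxy
    rcases lt_trichotomy x y with h | h | h
    · rw [Pe_lt b P h]; exact (hpaths x y h).1
    · exact absurd h hxy
    · rw [Pe_gt b P h, walkVal_reverse]; exact (hpaths y x h).1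
  have PeLen : ∀ x y, x ≠ y → d ≤ (Pe b P x y).length := by
    intro x y hxy
    rcases lt_trichotomy x y with h | h | h
    · rw [Pe_lt b P h]; exact (hpaths x y h).2
    · exact absurd h hxy
    · rw [Pe_gt b P h, SimpleGraph.Walk.length_reverse]; exact (hpaths y x h).2
  have PeBr : ∀ x y, x ≠ y → ∀ v ∈ (Pe b P x y).support, v ∈ Set.range b →
      v = b x ∨ v = b y := by
    intro x y hxy v hv hr
    obtain ⟨x0, y0, h0, hcase, hsupp⟩ := norm x y hxy
    have hres := hPbr x0 y0 h0 v ((hsupp v).mp hv) hr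
    rcases hcase with ⟨rfl, rfl⟩ | ⟨rfl, rfl⟩
    · exact hres
    · exact hres.symm
  have PeDisj : ∀ x y x' y', x ≠ y → x' ≠ y' →
      ¬(x = x' ∧ y = y') → ¬(x = y' ∧ y = x') → ∀ v,
      v ∈ (Pe b P x y).support → v ∈ (Pe b P x' y').support →
        (v = b x ∨ v = b y) ∧ (v = b x' ∨ v = b y') := by
    intro x y x' y' hxy hxy' hne1 hne2 v hv hv'
    obtain ⟨x0, y0, h0, hc, hs⟩ := norm x y hxy
    obtain ⟨x0', y0', h0', hc', hs'⟩ := norm x' y' hxy'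
    have hnep : (x0, y0) ≠ (x0', y0') := by
      intro hpe
      rw [Prod.mk.injEq] at hpe
      obtain ⟨e1, e2⟩ := hpe
      rcases hc with ⟨hc1, hc2⟩ | ⟨hc1, hc2⟩ <;>
        rcases hc' with ⟨hc1', hc2'⟩ | ⟨hc1', hc2'⟩ <;>
        subst hc1 <;> subst hc2 <;> subst hc1' <;> subst hc2' <;>
        first
          | exact hne1 ⟨e1, e2⟩
          | exact hne1 ⟨e2, e1⟩
          | exact hne2 ⟨e1, e2⟩
          | exact hne2 ⟨e2, e1⟩
          | exact hne1 ⟨e1.symm, e2.symm⟩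
          | exact hne1 ⟨e2.symm, e1.symm⟩
          | exact hne2 ⟨e1.symm, e2.symm⟩
          | exact hne2 ⟨e2.symm, e1.symm⟩
    have hres := hPdisj x0 y0 x0' y0' h0 h0' hnep v ((hs v).mp hv) ((hs' v).mp hv')
    constructor
    · rcases hc with ⟨rfl, rfl⟩ | ⟨rfl, rfl⟩
      · exact hres.1
      · exact hres.1.symm
    · rcases hc' with ⟨rfl, rfl⟩ | ⟨rfl, rfl⟩
      · exact hres.2
      · exact hres.2.symm
  -- segments are between distinct branching vertices
  have hadj : ∀ (i j : Fin t) (hij : i ≠ j) (a : ℕ), a < m →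
      chainVert t ω m hmω i j hij a ≠ chainVert t ω m hmω i j hij (a+1) := by
    intro i j hij a ha h
    have := chainVert_inj (by omega) (by omega) h
    omega
  -- constructing the main walks
  have hW : ∀ (i j : Fin t) (hij : i < j),
      ∃ w : H.Walk (b (Fin.castLE htq i)) (b (Fin.castLE htq j)),
      w.IsPath ∧ walkVal γ w = m • g ∧ m * d ≤ w.length ∧
      (∀ v, v ∈ w.support ↔ ∃ a, a < m ∧
        v ∈ (Pe b P (chainVert t ω m hmω i j hij.ne a)
          (chainVert t ω m hmω i j hij.ne (a+1))).support) := by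
    intro i j hij
    refine ⟨(chainWalk (fun k => b (chainVert t ω m hmω i j hij.ne k))
        (fun k => Pe b P (chainVert t ω m hmω i j hij.ne k)
          (chainVert t ω m hmω i j hij.ne (k+1))) m).copy
        (congrArg b (chainVert_zero t ω m hmω i j hij.ne))
        (congrArg b (chainVert_last t ω m hmω (by omega) i j hij.ne)), ?_, ?_, ?_, ?_⟩
    · rw [SimpleGraph.Walk.isPath_copy]
      refine chainWalk_isPath _ _ m (by omega) ?_ ?_
      · intro k hk
        exact PeIsPath _ _ (hadj i j hij.ne k hk)
      · intro k l hkl hl v hvk hvl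
        rcases Nat.eq_or_lt_of_le (show k+1 ≤ l by omega) with heq | hlt
        · subst heq
          have hb1 : ¬(chainVert t ω m hmω i j hij.ne k = chainVert t ω m hmω i j hij.ne (k+1)
              ∧ chainVert t ω m hmω i j hij.ne (k+1) = chainVert t ω m hmω i j hij.ne (k+1+1)) := by
            rintro ⟨h1, -⟩
            have := chainVert_inj (by omega) (by omega) h1
            omega
          have hb2 : ¬(chainVert t ω m hmω i j hij.ne k = chainVert t ω m hmω i j hij.ne (k+1+1)
              ∧ chainVert t ω m hmω i j hij.ne (k+1) = chainVert t ω m hmω i j hij.ne (k+1)) := by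
            rintro ⟨h1, -⟩
            have := chainVert_inj (by omega) (by omega) h1
            omega
          have hdisj := PeDisj _ _ _ _ (hadj i j hij.ne k (by omega))
            (hadj i j hij.ne (k+1) hl) hb1 hb2 v hvk hvl
          refine ⟨rfl, ?_⟩
          rcases hdisj.1 with h1 | h1
          · exfalso
            rcases hdisj.2 with h2 | h2
            · have := chainVert_inj (k := k) (l := k+1) (by omega) (by omega)
                (binj (h1.symm.trans h2))
              omega
            · have := chainVert_inj (k := k) (l := k+1+1) (by omega) (by omega)
                (binj (h1.symm.trans h2))
              omega
          · exact h1
        · exfalso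
          have hb1 : ¬(chainVert t ω m hmω i j hij.ne k = chainVert t ω m hmω i j hij.ne l
              ∧ chainVert t ω m hmω i j hij.ne (k+1) = chainVert t ω m hmω i j hij.ne (l+1)) := by
            rintro ⟨h1, -⟩
            have := chainVert_inj (by omega) (by omega) h1
            omega
          have hb2 : ¬(chainVert t ω m hmω i j hij.ne k = chainVert t ω m hmω i j hij.ne (l+1)
              ∧ chainVert t ω m hmω i j hij.ne (k+1) = chainVert t ω m hmω i j hij.ne l) := by
            rintro ⟨h1, -⟩
            have := chainVert_inj (by omega) (by omega) h1
            omega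
          have hdisj := PeDisj _ _ _ _ (hadj i j hij.ne k (by omega))
            (hadj i j hij.ne l hl) hb1 hb2 v hvk hvl
          rcases hdisj.1 with h1 | h1 <;> rcases hdisj.2 with h2 | h2
          · have := chainVert_inj (k := k) (l := l) (by omega) (by omega)
              (binj (h1.symm.trans h2))
            omega
          · have := chainVert_inj (k := k) (l := l+1) (by omega) (by omega)
              (binj (h1.symm.trans h2))
            omega
          · have := chainVert_inj (k := k+1) (l := l) (by omega) (by omega)
              (binj (h1.symm.trans h2))
            omega
          · have := chainVert_inj (k := k+1) (l := l+1) (by omega) (by omega)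
              (binj (h1.symm.trans h2))
            omega
    · rw [walkVal_copy]
      exact chainWalk_val γ _ _ g m (fun k hk => PeVal _ _ (hadj i j hij.ne k hk))
    · rw [SimpleGraph.Walk.length_copy]
      exact chainWalk_length _ _ d m (fun k hk => PeLen _ _ (hadj i j hij.ne k hk))
    · intro v
      rw [SimpleGraph.Walk.support_copy]
      exact chainWalk_mem_support _ _ m (by omega) v
  choose W hWpath hWval hWlen hWsupp using hW
  have pair_ne : ∀ i j k l : Fin t, i < j → k < l → (i, j) ≠ (k, l) →
      ({i, j} : Finset (Fin t)) ≠ {k, l} := by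
    intro i j k l hij hkl hne he
    have hi : i = k ∨ i = l := by
      have hmem : i ∈ ({k, l} : Finset (Fin t)) := he ▸ Finset.mem_insert_self i {j}
      simpa using hmem
    have hj : j = k ∨ j = l := by
      have hmem : j ∈ ({k, l} : Finset (Fin t)) :=
        he ▸ (by simp : j ∈ ({i, j} : Finset (Fin t)))
      simpa using hmem
    rcases hi with rfl | rfl <;> rcases hj with rfl | rfl
    · exact absurd hij (lt_irrefl _)
    · exact hne rfl
    · exact absurd (hij.trans hkl) (lt_irrefl _)
    · exact absurd hij (lt_irrefl _)
  refine ⟨fun s => b (Fin.castLE htq s), symWalks (fun s => b (Fin.castLE htq s)) W,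
    ⟨?_, ?_, ?_, ?_⟩, ?_⟩
  · intro s s' hss
    exact Fin.castLE_injective _ (binj hss)
  · intro i j hij
    rw [symWalks_of_lt _ _ hij]
    exact hWpath i j hij
  · intro i j hij v hv hr
    rw [symWalks_of_lt _ _ hij, hWsupp i j hij v] at hv
    obtain ⟨a, ha, hva⟩ := hv
    obtain ⟨s, rfl⟩ := hr
    have hrange : b (Fin.castLE htq s) ∈ Set.range b := ⟨Fin.castLE htq s, rfl⟩
    have hres := PeBr _ _ (hadj i j hij.ne a ha) _ hva hrange
    rcases hres with h1 | h1
    · have h2 := chainVert_eq_castLE (hij := hij.ne) (show a ≤ m by omega) (binj h1).symm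
      rcases h2 with ⟨-, rfl⟩ | ⟨ham, -⟩
      · exact Or.inl rfl
      · omega
    · have h2 := chainVert_eq_castLE (hij := hij.ne) (show a + 1 ≤ m by omega) (binj h1).symm
      rcases h2 with ⟨ha0, -⟩ | ⟨-, rfl⟩
      · omega
      · exact Or.inr rfl
  · intro i j k l hij hkl hne v hvij hvkl
    rw [symWalks_of_lt _ _ hij, hWsupp i j hij v] at hvij
    rw [symWalks_of_lt _ _ hkl, hWsupp k l hkl v] at hvkl
    obtain ⟨a, ha, hva⟩ := hvij
    obtain ⟨a', ha', hva'⟩ := hvkl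
    have hpair := pair_ne i j k l hij hkl hne
    have hkey : ∀ (x x' : ℕ), x ≤ m → x' ≤ m → chainVert t ω m hmω i j hij.ne x =
        chainVert t ω m hmω k l hkl.ne x' → (x = 0 ∨ x = m) := by
      intro x x' hx hx' hxx
      obtain ⟨u, hu1, hu2, hu3⟩ := chainVert_cross hx hx' hpair hxx
      rcases chainVert_eq_castLE hx hu3 with ⟨h0, -⟩ | ⟨h0, -⟩
      · exact Or.inl h0
      · exact Or.inr h0
    have hb1 : ¬(chainVert t ω m hmω i j hij.ne a = chainVert t ω m hmω k l hkl.ne a'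
        ∧ chainVert t ω m hmω i j hij.ne (a+1) = chainVert t ω m hmω k l hkl.ne (a'+1)) := by
      rintro ⟨h1, h2⟩
      have e1 := hkey a a' (by omega) (by omega) h1
      have e2 := hkey (a+1) (a'+1) (by omega) (by omega) h2
      omega
    have hb2 : ¬(chainVert t ω m hmω i j hij.ne a = chainVert t ω m hmω k l hkl.ne (a'+1)
        ∧ chainVert t ω m hmω i j hij.ne (a+1) = chainVert t ω m hmω k l hkl.ne a') := by
      rintro ⟨h1, h2⟩
      have e1 := hkey a (a'+1) (by omega) (by omega) h1
      have e2 := hkey (a+1) a' (by omega) (by omega) h2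
      omega
    have hdisj := PeDisj _ _ _ _ (hadj i j hij.ne a ha) (hadj k l hkl.ne a' ha')
      hb1 hb2 v hva hva'
    have hfin : ∀ (x x' : ℕ), x ≤ m → x' ≤ m →
        v = b (chainVert t ω m hmω i j hij.ne x) →
        v = b (chainVert t ω m hmω k l hkl.ne x') →
        (v = b (Fin.castLE htq i) ∨ v = b (Fin.castLE htq j)) ∧
        (v = b (Fin.castLE htq k) ∨ v = b (Fin.castLE htq l)) := by
      intro x x' hx hx' hv1 hv2
      have hxx : chainVert t ω m hmω i j hij.ne x = chainVert t ω m hmω k l hkl.ne x' :=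
        binj (hv1.symm.trans hv2)
      obtain ⟨u, hu1, hu2, hu3⟩ := chainVert_cross hx hx' hpair hxx
      have hvb : v = b (Fin.castLE htq u) := by rw [hv1, hu3]
      constructor
      · rcases hu1 with rfl | rfl
        · exact Or.inl hvb
        · exact Or.inr hvb
      · rcases hu2 with rfl | rfl
        · exact Or.inl hvb
        · exact Or.inr hvb
    rcases hdisj.1 with h1 | h1 <;> rcases hdisj.2 with h2 | h2
    · exact hfin a a' (by omega) (by omega) h1 h2
    · exact hfin a (a'+1) (by omega) (by omega) h1 h2
    · exact hfin (a+1) a' (by omega) (by omega) h1 h2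
    · exact hfin (a+1) (a'+1) (by omega) (by omega) h1 h2
  · intro i j hij
    rw [symWalks_of_lt _ _ hij]
    constructor
    · rw [hWval i j hij]; exact hmA
    · exact le_trans (Nat.le_mul_of_pos_left d (by omega)) (hWlen i j hij)

end ArbPaper
end
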